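/- arXiv:1711.07061 — 3 statements merged into one kernel-verified Lean document; each statement's English description precedes it below -/
import Mathlib

section
/- Let K ≥ 1 and L ≥ 0 be integers and ε₁,…,ε_K real numbers. Then ∫_{[0,∞)^K} Δ(y₁,…,y_K) · det( ₀F₁(1; ε_i y_j) )_{i,j=1}^K · ∏_{i=1}^K y_i^L e^{−y_i} dy = K! · (−1)^{KL + K(K−1)/2} · e^{∑_{i=1}^K ε_i} · det( π_{L+i−1}(−ε_j) )_{i,j=1}^K, where the matrix on the right has (i,j) entry π_{L+i−1}(−ε_j). (This is Proposition B.1 of the paper.) -/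
open MeasureTheory Finset Matrix

/-- The entire function `₀F₁(1;x) = ∑ xⁿ/(n!)²` (real argument). -/
noncomputable def f01 (x : ℝ) : ℝ := ∑' n : ℕ, x ^ n / ((n.factorial : ℝ)) ^ 2

/-- The entire function `₀F₁(1;x) = ∑ xⁿ/(n!)²` (complex argument). -/
noncomputable def f01C (x : ℂ) : ℂ := ∑' n : ℕ, x ^ n / ((n.factorial : ℂ)) ^ 2

/-- Vandermonde product `Δ(x₁,…,x_m) = ∏_{i<j} (x_j − x_i)`. -/
noncomputable def vand {m : ℕ} (x : Fin m → ℝ) : ℝ :=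
  ∏ p ∈ Finset.univ.filter (fun p : Fin m × Fin m => p.1 < p.2), (x p.2 - x p.1)

/-- The nonnegative orthant `[0,∞)^m`. -/
def orth (m : ℕ) : Set (Fin m → ℝ) := Set.univ.pi fun _ => Set.Ici (0 : ℝ)

/-- The joint density `Δ(x)·det(₀F₁(1;ω_k x_j))·∏ x_i^L e^{−x_i}` of the squared
singular values. -/
noncomputable def dens (N L : ℕ) (ω : Fin N → ℝ) (x : Fin N → ℝ) : ℝ :=
  vand x * Matrix.det (Matrix.of fun k j : Fin N => f01 (ω k * x j)) *
    ∏ i, (x i ^ L * Real.exp (-x i))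

/-- The matrix weight `w(X) = exp(−Tr(XX*)+Tr(ΩX)+Tr(X*Ω*))·det(X*X)^L`
(complex-valued; its value is in fact real). -/
noncomputable def W (N L : ℕ) (Ω X : Matrix (Fin N) (Fin N) ℂ) : ℂ :=
  Complex.exp (-Matrix.trace (X * Xᴴ) + Matrix.trace (Ω * X) + Matrix.trace (Xᴴ * Ωᴴ)) *
    Matrix.det (Xᴴ * X) ^ L

/-- Matrix-model average `⟨h⟩ = (∫ h(X) w(X) dX)/(∫ w(X) dX)`, the integrals being
over Lebesgue measure on the 2N² real coordinates of X. -/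
noncomputable def mavg (N L : ℕ) (Ω : Matrix (Fin N) (Fin N) ℂ)
    (h : Matrix (Fin N) (Fin N) ℂ → ℂ) : ℂ :=
  (∫ X : Fin N → Fin N → ℂ, h (Matrix.of X) * W N L Ω (Matrix.of X)) /
    ∫ X : Fin N → Fin N → ℂ, W N L Ω (Matrix.of X)

/-- Eigenvalue-ensemble average `E_{ω,L}[g]` with respect to the density `dens`. -/
noncomputable def Eavg (N L : ℕ) (ω : Fin N → ℝ) (g : (Fin N → ℝ) → ℂ) : ℂ :=
  (∫ x in orth N, g x * (dens N L ω x : ℂ)) /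
    ((∫ x in orth N, dens N L ω x : ℝ) : ℂ)

/-- The normalization `Ñ_L = ∫_{[0,∞)^L} ∏_{i,j}(t_i+ω_j)·Δ(t)²·∏ e^{−t_i} dt`. -/
noncomputable def Ntilde (N L : ℕ) (ω : Fin N → ℝ) : ℝ :=
  ∫ t in orth L, (∏ i, ∏ j, (t i + ω j)) * vand t ^ 2 * ∏ i, Real.exp (-(t i))

/-- The degenerate normalization `Ñ_L(ρ) = ∫_{[0,∞)^L} ∏ (t_i+ρ)^N·Δ(t)²·∏ e^{−t_i} dt`. -/
noncomputable def NtildeDeg (N L : ℕ) (ρ : ℝ) : ℝ :=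
  ∫ t in orth L, (∏ i, (t i + ρ) ^ N) * vand t ^ 2 * ∏ i, Real.exp (-(t i))

/-- The Laguerre polynomial `L_n(x) = ∑_{k=0}^n (n choose k)(−x)^k/k!`. -/
noncomputable def laguerre (n : ℕ) (x : ℝ) : ℝ :=
  ∑ k ∈ Finset.range (n + 1), (n.choose k : ℝ) * (-x) ^ k / (k.factorial : ℝ)

/-- The monic Laguerre polynomial `π_n(x) = (−1)^n n! L_n(x)`. -/
noncomputable def piL (n : ℕ) (x : ℝ) : ℝ := (-1 : ℝ) ^ n * (n.factorial : ℝ) * laguerre n x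

/-- The Bessel function `J_k(x) = ∑_m (−1)^m (x/2)^{2m+k}/(m!(m+k)!)`. -/
noncomputable def besselJ (k : ℕ) (x : ℝ) : ℝ :=
  ∑' m : ℕ, (-1 : ℝ) ^ m * (x / 2) ^ (2 * m + k) / ((m.factorial : ℝ) * ((m + k).factorial : ℝ))

/-- The moment matrix `G_{i,j} = (i−1)!·e^{ω_j}·L_{i−1}(−ω_j)` (0-based indices). -/
noncomputable def Gmat (N : ℕ) (ω : Fin N → ℝ) : Matrix (Fin N) (Fin N) ℝ :=
  Matrix.of fun i j => ((i : ℕ).factorial : ℝ) * Real.exp (ω j) * laguerre (i : ℕ) (-ω j)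

/-!
Write `Δ(y) = det (y_j ^ i)` and absorb the weight `y ^ L e^{-y}` into the columns of the
`₀F₁` determinant. Andréief's identity turns the integral of the product of the two
determinants into `K!` times the determinant of the one-variable moments
`∫₀^∞ y ^ (L + i) e^{-y} ₀F₁(1; ε_k y) dy`. Integrating the series termwise, such a moment is
`∑ₘ ε_k ^ m (L + i + m)! / (m!)²`, which by Vandermonde's convolution is the Cauchy product of
`e^{ε_k}` with the polynomial `(L + i)! L_{L+i}(-ε_k)`. Finally `e^{ε_k}` factors out of the
columns and `(-1) ^ (L + i)` out of the rows.
-/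

open Set Equiv

theorem Matrix.sum_perm_sum_perm_sign_mul_prod {ι R : Type*} [Fintype ι] [DecidableEq ι]
    [CommRing R] (M : Matrix ι ι R) :
    ∑ σ : Perm ι, ∑ τ : Perm ι, ((Perm.sign σ : ℤ) : R) * ((Perm.sign τ : ℤ) : R) *
      ∏ j, M (σ j) (τ j) = (Fintype.card ι).factorial * M.det := by
  have inner (τ : Perm ι) : ∑ σ : Perm ι, ((Perm.sign σ : ℤ) : R) * ((Perm.sign τ : ℤ) : R) *
      ∏ j, M (σ j) (τ j) = M.det := by
    rw [← Equiv.sum_comp (Equiv.mulRight τ), det_apply']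
    refine Finset.sum_congr rfl fun ρ _ => ?_
    have hsign : ((Perm.sign (ρ * τ) : ℤ) : R) * ((Perm.sign τ : ℤ) : R) = (Perm.sign ρ : ℤ) := by
      rw [Perm.sign_mul, Units.val_mul, Int.cast_mul, mul_assoc, ← Int.cast_mul,
        ← Units.val_mul, Int.units_mul_self, Units.val_one, Int.cast_one, mul_one]
    rw [coe_mulRight, hsign]
    exact congrArg _ (Equiv.prod_comp τ fun i => M (ρ i) i)
  rw [Finset.sum_comm, Finset.sum_congr rfl fun τ _ => inner τ, Finset.sum_const,
    Finset.card_univ, Fintype.card_perm, nsmul_eq_mul]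

theorem MeasureTheory.integral_det_mul_det {α ι : Type*} [MeasurableSpace α] {μ : Measure α}
    [SigmaFinite μ] [Fintype ι] [DecidableEq ι] (f g : ι → α → ℝ)
    (hfg : ∀ i k, Integrable (fun x => f i x * g k x) μ) :
    ∫ y, (of fun i j => f i (y j)).det * (of fun i j => g i (y j)).det ∂(Measure.pi fun _ => μ) =
      (Fintype.card ι).factorial * (of fun i k => ∫ x, f i x * g k x ∂μ).det := by
  have expand (y : ι → α) : (of fun i j => f i (y j)).det * (of fun i j => g i (y j)).det =
      ∑ σ : Perm ι, ∑ τ : Perm ι, ((Perm.sign σ : ℤ) : ℝ) * ((Perm.sign τ : ℤ) : ℝ) *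
        ∏ j, (f (σ j) (y j) * g (τ j) (y j)) := by
    simp only [det_apply', of_apply, Finset.sum_mul_sum, Finset.prod_mul_distrib]
    exact Finset.sum_congr rfl fun σ _ => Finset.sum_congr rfl fun τ _ => by ring
  have hint (σ τ : Perm ι) : Integrable (fun y : ι → α => ((Perm.sign σ : ℤ) : ℝ) *
      ((Perm.sign τ : ℤ) : ℝ) * ∏ j, (f (σ j) (y j) * g (τ j) (y j))) (Measure.pi fun _ => μ) :=
    (Integrable.fintype_prod fun j => hfg (σ j) (τ j)).const_mul _
  simp_rw [expand]
  rw [integral_finsetSum _ fun σ _ => integrable_finsetSum _ fun τ _ => hint σ τ,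
    ← sum_perm_sum_perm_sign_mul_prod]
  refine Finset.sum_congr rfl fun σ _ => ?_
  rw [integral_finsetSum _ fun τ _ => hint σ τ]
  refine Finset.sum_congr rfl fun τ _ => ?_
  rw [integral_const_mul, integral_fintype_prod_eq_prod (fun j x => f (σ j) x * g (τ j) x)]
  rfl

theorem MeasureTheory.Integrable.tsum_of_summable_integral_norm {α E ι : Type*}
    [MeasurableSpace α] {μ : Measure α} [NormedAddCommGroup E] [Countable ι] {F : ι → α → E}
    (hF_meas : AEStronglyMeasurable (fun a => ∑' i, F i a) μ)
    (hF_int : ∀ i, Integrable (F i) μ) (hF_sum : Summable fun i => ∫ a, ‖F i a‖ ∂μ) :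
    Integrable (fun a => ∑' i, F i a) μ := by
  refine ⟨hF_meas, ?_⟩
  calc ∫⁻ a, ‖∑' i, F i a‖ₑ ∂μ ≤ ∫⁻ a, ∑' i, ‖F i a‖ₑ ∂μ :=
        lintegral_mono fun a => enorm_tsum_le_tsum_enorm
    _ = ∑' i, ENNReal.ofReal (∫ a, ‖F i a‖ ∂μ) := by
        rw [lintegral_tsum fun i => (hF_int i).aestronglyMeasurable.enorm]
        exact tsum_congr fun i => (ofReal_integral_norm_eq_lintegral_enorm (hF_int i)).symm
    _ < ⊤ := by
        rw [← ENNReal.ofReal_tsum_of_nonneg (fun i => integral_nonneg fun a => norm_nonneg _)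
          hF_sum]
        exact ENNReal.ofReal_lt_top

lemma summable_f01 (x : ℝ) : Summable fun n : ℕ => x ^ n / (n.factorial : ℝ) ^ 2 := by
  refine .of_norm_bounded (Real.summable_pow_div_factorial |x|) fun n => ?_
  have h : (n.factorial : ℝ) ≤ (n.factorial : ℝ) ^ 2 := by
    nlinarith [(Nat.one_le_cast (α := ℝ)).mpr n.factorial_pos]
  rw [norm_div, norm_pow, Real.norm_eq_abs, norm_pow, Real.norm_natCast]
  gcongr

lemma measurable_f01 : Measurable f01 :=
  measurable_of_tendsto_metrizable' Filter.atTop (fun N => by fun_prop)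
    (tendsto_pi_nhds.mpr fun x => (summable_f01 x).hasSum.tendsto_sum_nat)

lemma sum_antidiagonal_laguerre_mul_exp_coeff (n m : ℕ) (a : ℝ) :
    ∑ kl ∈ antidiagonal m,
        (n.factorial * n.choose kl.1 * a ^ kl.1 / kl.1.factorial) * (a ^ kl.2 / kl.2.factorial) =
      a ^ m / (m.factorial : ℝ) ^ 2 * (n + m).factorial := by
  have term (kl : ℕ × ℕ) (hkl : kl ∈ antidiagonal m) :
      (n.factorial * n.choose kl.1 * a ^ kl.1 / kl.1.factorial) * (a ^ kl.2 / kl.2.factorial) =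
        a ^ m * n.factorial / m.factorial * (n.choose kl.1 * m.choose kl.2 : ℕ) := by
    obtain rfl := HasAntidiagonal.mem_antidiagonal.mp hkl
    have hfac : ((kl.1 + kl.2).choose kl.2 * kl.1.factorial * kl.2.factorial : ℝ) =
        (kl.1 + kl.2).factorial := by
      exact_mod_cast Nat.add_choose_mul_factorial_mul_factorial kl.1 kl.2
    have hchoose : ((kl.1 + kl.2).choose kl.2 : ℝ) ≠ 0 :=
      Nat.cast_ne_zero.mpr (Nat.choose_pos (Nat.le_add_left _ _)).ne'
    rw [← hfac, pow_add]
    push_cast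
    field_simp
  have hvandermonde : ∑ kl ∈ antidiagonal m, n.choose kl.1 * m.choose kl.2 = (n + m).choose m :=
    (Nat.add_choose_eq n m m).symm
  have hfac : ((n + m).choose m * n.factorial * m.factorial : ℝ) = (n + m).factorial := by
    exact_mod_cast Nat.add_choose_mul_factorial_mul_factorial n m
  rw [sum_congr rfl term, ← mul_sum, ← Nat.cast_sum, hvandermonde, ← hfac]
  field_simp

lemma hasSum_factorial_mul_exp_mul_laguerre (n : ℕ) (a : ℝ) :
    HasSum (fun m : ℕ => a ^ m / (m.factorial : ℝ) ^ 2 * (n + m).factorial)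
      (n.factorial * Real.exp a * laguerre n (-a)) := by
  set p : ℕ → ℝ := fun k => n.factorial * n.choose k * a ^ k / k.factorial
  set q : ℕ → ℝ := fun j => a ^ j / j.factorial
  have hp_supp : ∀ k ∉ Finset.range (n + 1), p k = 0 := fun k hk => by
    simp [p, Nat.choose_eq_zero_of_lt (by simpa using hk : n < k)]
  have hp : Summable fun k => ‖p k‖ := summable_of_ne_finset_zero fun k hk => by
    rw [hp_supp k hk, norm_zero]
  have hq : Summable fun j => ‖q j‖ := by
    simpa [q, norm_div, norm_pow] using Real.summable_pow_div_factorial |a|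
  have hP : ∑' k, p k = n.factorial * laguerre n (-a) := by
    rw [tsum_eq_sum hp_supp, laguerre, Finset.mul_sum]
    exact Finset.sum_congr rfl fun k _ => by simp only [p, neg_neg]; ring
  have hQ : ∑' j, q j = Real.exp a := by
    rw [Real.exp_eq_exp_ℝ, NormedSpace.exp_eq_tsum_div]
  have hcauchy := tsum_mul_tsum_eq_tsum_sum_antidiagonal_of_summable_norm hp hq
  have hsum := summable_sum_mul_antidiagonal_of_summable_norm' hp hp.of_norm hq hq.of_norm
  simp only [p, q, sum_antidiagonal_laguerre_mul_exp_coeff] at hcauchy hsum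
  rw [hP, hQ, mul_right_comm] at hcauchy
  exact hcauchy ▸ hsum.hasSum

lemma integrableOn_pow_mul_exp_neg (k : ℕ) :
    IntegrableOn (fun y : ℝ => y ^ k * Real.exp (-y)) (Ici 0) := by
  refine (integrableOn_Ici_iff_integrableOn_Ioi).2 <|
    (Real.GammaIntegral_convergent (Nat.cast_add_one_pos k)).congr_fun (fun y hy => ?_)
      measurableSet_Ioi
  simp [mul_comm]

lemma integral_pow_mul_exp_neg_Ici (k : ℕ) :
    ∫ y in Ici (0 : ℝ), y ^ k * Real.exp (-y) = k.factorial := by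
  rw [integral_Ici_eq_integral_Ioi, ← Real.Gamma_nat_eq_factorial,
    Real.Gamma_eq_integral (Nat.cast_add_one_pos k)]
  refine setIntegral_congr_fun measurableSet_Ioi fun y hy => ?_
  simp [mul_comm]

lemma pow_mul_exp_neg_mul_f01_eq_tsum (n : ℕ) (a y : ℝ) :
    y ^ n * Real.exp (-y) * f01 (a * y) =
      ∑' m : ℕ, a ^ m / (m.factorial : ℝ) ^ 2 * (y ^ (n + m) * Real.exp (-y)) := by
  rw [f01, ← tsum_mul_left]
  exact tsum_congr fun m => by ring

lemma integral_norm_f01_series_term_Ici (n m : ℕ) (a : ℝ) :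
    ∫ y in Ici (0 : ℝ), ‖a ^ m / (m.factorial : ℝ) ^ 2 * (y ^ (n + m) * Real.exp (-y))‖ =
      |a| ^ m / (m.factorial : ℝ) ^ 2 * (n + m).factorial := by
  rw [← integral_pow_mul_exp_neg_Ici (n + m), ← integral_const_mul]
  refine setIntegral_congr_fun measurableSet_Ici fun y (hy : 0 ≤ y) => ?_
  simp [abs_of_nonneg hy, abs_of_nonneg (Real.exp_pos _).le]

lemma integrableOn_pow_mul_exp_neg_mul_f01 (n : ℕ) (a : ℝ) :
    IntegrableOn (fun y => y ^ n * Real.exp (-y) * f01 (a * y)) (Ici 0) := by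
  have hmeas : Measurable fun y : ℝ => y ^ n * Real.exp (-y) * f01 (a * y) := by
    have := measurable_f01; fun_prop
  simp_rw [pow_mul_exp_neg_mul_f01_eq_tsum n a] at hmeas ⊢
  refine .tsum_of_summable_integral_norm hmeas.aestronglyMeasurable
    (fun m => (integrableOn_pow_mul_exp_neg (n + m)).const_mul _) ?_
  simp_rw [integral_norm_f01_series_term_Ici]
  exact (hasSum_factorial_mul_exp_mul_laguerre n |a|).summable

lemma integral_pow_mul_exp_neg_mul_f01_Ici (n : ℕ) (a : ℝ) :
    ∫ y in Ici (0 : ℝ), y ^ n * Real.exp (-y) * f01 (a * y) =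
      n.factorial * Real.exp a * laguerre n (-a) := by
  simp_rw [pow_mul_exp_neg_mul_f01_eq_tsum n a]
  rw [← integral_tsum_of_summable_integral_norm
    (fun m => (integrableOn_pow_mul_exp_neg (n + m)).const_mul _)]
  · simp_rw [integral_const_mul, integral_pow_mul_exp_neg_Ici]
    exact (hasSum_factorial_mul_exp_mul_laguerre n a).tsum_eq
  · simp_rw [integral_norm_f01_series_term_Ici]
    exact (hasSum_factorial_mul_exp_mul_laguerre n |a|).summable

lemma vand_eq_det_vandermonde {m : ℕ} (x : Fin m → ℝ) : vand x = (vandermonde x).det := by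
  rw [det_vandermonde, vand, Finset.prod_filter, Fintype.prod_prod_type]
  refine Finset.prod_congr rfl fun i _ => ?_
  rw [← Finset.prod_filter, Finset.filter_lt_eq_Ioi]

lemma volume_restrict_orth (m : ℕ) :
    volume.restrict (orth m) = Measure.pi fun _ => volume.restrict (Ici (0 : ℝ)) := by
  rw [orth, volume_pi, Measure.restrict_pi_pi]

lemma factorial_mul_laguerre (n : ℕ) (x : ℝ) :
    n.factorial * laguerre n x = (-1) ^ n * piL n x := by
  rw [piL, ← mul_assoc, ← mul_assoc, ← pow_add, Even.neg_one_pow ⟨n, rfl⟩, one_mul]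

lemma det_factorial_mul_exp_mul_laguerre (K L : ℕ) (ε : Fin K → ℝ) :
    (of fun i k : Fin K => ((L + (i : ℕ)).factorial : ℝ) * Real.exp (ε k) *
      laguerre (L + (i : ℕ)) (-ε k)).det =
      (-1) ^ (K * L + K * (K - 1) / 2) * Real.exp (∑ i, ε i) *
        (of fun i j : Fin K => piL (L + (i : ℕ)) (-ε j)).det := by
  have hsign : ∑ i : Fin K, (L + (i : ℕ)) = K * L + K * (K - 1) / 2 := by
    rw [Finset.sum_add_distrib, Fin.sum_univ_eq_sum_range (fun i => i), Finset.sum_range_id]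
    simp
  have hentry (i k : Fin K) : ((L + (i : ℕ)).factorial : ℝ) * Real.exp (ε k) *
      laguerre (L + (i : ℕ)) (-ε k) =
      Real.exp (ε k) * ((-1) ^ (L + (i : ℕ)) * piL (L + (i : ℕ)) (-ε k)) := by
    rw [← factorial_mul_laguerre]; ring
  calc (of fun i k : Fin K => ((L + (i : ℕ)).factorial : ℝ) * Real.exp (ε k) *
        laguerre (L + (i : ℕ)) (-ε k)).det
      = (∏ k, Real.exp (ε k)) * ((∏ i : Fin K, (-1 : ℝ) ^ (L + (i : ℕ))) *
          (of fun i j : Fin K => piL (L + (i : ℕ)) (-ε j)).det) := by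
        rw [← det_mul_column, ← det_mul_row]
        simp_rw [hentry]
        rfl
    _ = _ := by rw [← Real.exp_sum, Finset.prod_pow_eq_pow_sum, hsign]; ring

theorem statement13_general (K L : ℕ) (ε : Fin K → ℝ) :
    (∫ y in orth K,
      vand y * Matrix.det (Matrix.of fun i j : Fin K => f01 (ε i * y j)) *
        ∏ i, (y i ^ L * Real.exp (-(y i)))) =
      (K.factorial : ℝ) * (-1 : ℝ) ^ (K * L + K * (K - 1) / 2) *
        Real.exp (∑ i, ε i) *
        Matrix.det (Matrix.of fun i j : Fin K => piL (L + (i : ℕ)) (-ε j)) := by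
  have hintegrand (y : Fin K → ℝ) :
      vand y * (of fun i j : Fin K => f01 (ε i * y j)).det * ∏ i, (y i ^ L * Real.exp (-(y i))) =
        (of fun i j : Fin K => y j ^ (i : ℕ)).det *
          (of fun i j : Fin K => y j ^ L * Real.exp (-(y j)) * f01 (ε i * y j)).det := by
    rw [vand_eq_det_vandermonde, ← det_transpose, mul_assoc, mul_comm _ (∏ i, _),
      ← det_mul_row]
    rfl
  have hmoment_eq (i : ℕ) (a x : ℝ) : x ^ i * (x ^ L * Real.exp (-x) * f01 (a * x)) =
      x ^ (L + i) * Real.exp (-x) * f01 (a * x) := by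
    ring
  have hmoment (i k : Fin K) :
      IntegrableOn (fun x => x ^ (i : ℕ) * (x ^ L * Real.exp (-x) * f01 (ε k * x))) (Ici 0) := by
    simpa only [hmoment_eq] using integrableOn_pow_mul_exp_neg_mul_f01 (L + i) (ε k)
  simp_rw [hintegrand, volume_restrict_orth, integral_det_mul_det _ _ hmoment, hmoment_eq,
    integral_pow_mul_exp_neg_mul_f01_Ici, det_factorial_mul_exp_mul_laguerre, Fintype.card_fin]
  ring

theorem statement13 (K L : ℕ) (hK : 1 ≤ K) (ε : Fin K → ℝ) :
    (∫ y in orth K,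
      vand y * Matrix.det (Matrix.of fun i j : Fin K => f01 (ε i * y j)) *
        ∏ i, (y i ^ L * Real.exp (-(y i)))) =
      (K.factorial : ℝ) * (-1 : ℝ) ^ (K * L + K * (K - 1) / 2) *
        Real.exp (∑ i, ε i) *
        Matrix.det (Matrix.of fun i j : Fin K => piL (L + (i : ℕ)) (-ε j)) :=
  statement13_general K L ε
end

section
/- Let N ≥ 1 be an integer and ω₁,…,ω_N pairwise distinct reals. Let G be the N×N real matrix with entries G_{i,j} = (i−1)! · e^{ω_j} · L_{i−1}(−ω_j), 1 ≤ i,j ≤ N. Then G is invertible and for every i with 1 ≤ i ≤ N, (G^{−1})_{i,N} = e^{−ω_i} / ∏_{τ≠i} (ω_i−ω_τ). (This is the formula c_{N,i} = e^{−ω_i}/∏_{τ≠i}(ω_i−ω_τ) for the entries of the inverse moment matrix in the case L = 0.) -/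
open MeasureTheory Finset Matrix

/-!
Since `k! L_k(-x)` is a monic polynomial `Q_k` of degree `k`, the matrix `G` is
`(Q_i(ω_j))_{i,j}` times `diag(e^{ω_j})`, and `det (Q_i(ω_j)) = det (ω_j^i)` is a Vandermonde
determinant. For the last column of `G⁻¹`, the vector `c_j = e^{-ω_j} / ∏_{τ≠j} (ω_j - ω_τ)`
satisfies `(G c)_k = ∑_j Q_k(ω_j) / ∏_{τ≠j} (ω_j - ω_τ)`, which by Lagrange interpolation is the
coefficient of `X^{N-1}` in `Q_k`, i.e. `1` if `k = N - 1` and `0` otherwise.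
-/

open Polynomial

namespace Matrix

theorem inv_apply_of_mulVec_eq_single {n K : Type*} [Fintype n] [DecidableEq n] [CommRing K]
    {A : Matrix n n K} (hA : IsUnit A.det) {c : n → K} {e : n} (h : A *ᵥ c = Pi.single e 1)
    (i : n) : A⁻¹ i e = c i := by
  have := congrFun (congrArg (A⁻¹ *ᵥ ·) h) i
  rwa [mulVec_mulVec, nonsing_inv_mul _ hA, one_mulVec, mulVec_single_one, eq_comm] at this

end Matrix

namespace Lagrange

theorem sum_eval_div_prod_sub_of_monic {F : Type*} [Field F] {N : ℕ} {v : Fin N → F}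
    (hv : Function.Injective v) {p : F[X]} (hp : p.Monic) (hdeg : p.natDegree < N) :
    ∑ j, p.eval (v j) / ∏ τ ∈ Finset.univ.erase j, (v j - v τ) =
      if p.natDegree = N - 1 then 1 else 0 := by
  have hcard : #(Finset.univ : Finset (Fin N)) = N := by simp
  have hdegree : p.degree < #(Finset.univ : Finset (Fin N)) := by
    rw [hcard]; exact (degree_le_natDegree).trans_lt (by exact_mod_cast hdeg)
  rw [← coeff_eq_sum hv.injOn hdegree, hcard]
  split_ifs with h
  · rw [← h, hp.coeff_natDegree]
  · exact coeff_eq_zero_of_natDegree_lt (by omega)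

end Lagrange

noncomputable def negLaguerrePoly (k : ℕ) : ℝ[X] :=
  ∑ m ∈ Finset.range (k + 1), C ((k.choose m : ℝ) * k.factorial / m.factorial) * X ^ m

theorem coeff_negLaguerrePoly (k n : ℕ) :
    (negLaguerrePoly k).coeff n =
      if n ≤ k then (k.choose n : ℝ) * k.factorial / n.factorial else 0 := by
  simp [negLaguerrePoly, coeff_X_pow]

theorem eval_negLaguerrePoly (k : ℕ) (x : ℝ) :
    (negLaguerrePoly k).eval x = k.factorial * laguerre k (-x) := by
  rw [negLaguerrePoly, laguerre, eval_finsetSum, Finset.mul_sum]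
  refine Finset.sum_congr rfl fun m _ => ?_
  simp only [eval_mul, eval_C, eval_pow, eval_X, neg_neg]
  ring

theorem coeff_negLaguerrePoly_self (k : ℕ) : (negLaguerrePoly k).coeff k = 1 := by
  simp [coeff_negLaguerrePoly, Nat.factorial_ne_zero]

theorem natDegree_negLaguerrePoly_le (k : ℕ) : (negLaguerrePoly k).natDegree ≤ k :=
  natDegree_le_iff_coeff_eq_zero.mpr fun n hn => by
    simp [coeff_negLaguerrePoly, not_le.mpr hn]

theorem natDegree_negLaguerrePoly (k : ℕ) : (negLaguerrePoly k).natDegree = k :=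
  natDegree_eq_of_le_of_coeff_ne_zero (natDegree_negLaguerrePoly_le k)
    (by simp [coeff_negLaguerrePoly_self])

theorem monic_negLaguerrePoly (k : ℕ) : (negLaguerrePoly k).Monic :=
  monic_of_natDegree_le_of_coeff_eq_one k (natDegree_negLaguerrePoly_le k)
    (coeff_negLaguerrePoly_self k)

theorem Gmat_apply (N : ℕ) (ω : Fin N → ℝ) (i j : Fin N) :
    Gmat N ω i j = (negLaguerrePoly i).eval (ω j) * Real.exp (ω j) := by
  rw [Gmat, of_apply, eval_negLaguerrePoly]
  ring

theorem Gmat_eq_mul_diagonal (N : ℕ) (ω : Fin N → ℝ) :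
    Gmat N ω =
      (of fun j i : Fin N => (negLaguerrePoly i).eval (ω j))ᵀ * diagonal (Real.exp ∘ ω) := by
  ext i j
  simp [Gmat_apply, mul_diagonal]

theorem det_Gmat (N : ℕ) (ω : Fin N → ℝ) :
    (Gmat N ω).det = (vandermonde ω).det * ∏ j, Real.exp (ω j) := by
  rw [Gmat_eq_mul_diagonal, det_mul, det_transpose, det_diagonal,
    det_eval_matrixOfPolynomials_eq_det_vandermonde ω (fun i => negLaguerrePoly i)
      (fun i => natDegree_negLaguerrePoly i) (fun i => monic_negLaguerrePoly i)]
  rfl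

theorem isUnit_det_Gmat {N : ℕ} {ω : Fin N → ℝ} (hω : Function.Injective ω) :
    IsUnit (Gmat N ω).det := by
  rw [det_Gmat]
  exact (mul_ne_zero (det_vandermonde_ne_zero_iff.mpr hω)
    (Finset.prod_ne_zero_iff.mpr fun j _ => (Real.exp_pos _).ne')).isUnit

theorem Gmat_mulVec_eq_single {N : ℕ} {ω : Fin N → ℝ} (hω : Function.Injective ω)
    {e : Fin N} (he : (e : ℕ) = N - 1) :
    Gmat N ω *ᵥ (fun j => Real.exp (-ω j) / ∏ τ ∈ Finset.univ.erase j, (ω j - ω τ)) =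
      Pi.single e 1 := by
  ext k
  have hterm (j : Fin N) :
      Gmat N ω k j * (Real.exp (-ω j) / ∏ τ ∈ Finset.univ.erase j, (ω j - ω τ)) =
        (negLaguerrePoly k).eval (ω j) / ∏ τ ∈ Finset.univ.erase j, (ω j - ω τ) := by
    rw [Gmat_apply, Real.exp_neg]
    field_simp
  simp only [mulVec, dotProduct, hterm]
  rw [Lagrange.sum_eval_div_prod_sub_of_monic hω (monic_negLaguerrePoly k)
    (by rw [natDegree_negLaguerrePoly]; exact k.2), natDegree_negLaguerrePoly, Pi.single_apply,
    ← he]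
  simp only [Fin.val_inj]

theorem statement16 (N : ℕ) (hN : 1 ≤ N) (ω : Fin N → ℝ) (hdist : Function.Injective ω) :
    IsUnit (Gmat N ω).det ∧
      ∀ i : Fin N,
        (Gmat N ω)⁻¹ i (⟨N - 1, by omega⟩ : Fin N) =
          Real.exp (-ω i) / ∏ τ ∈ Finset.univ.erase i, (ω i - ω τ) :=
  ⟨isUnit_det_Gmat hdist, Matrix.inv_apply_of_mulVec_eq_single (isUnit_det_Gmat hdist)
    (Gmat_mulVec_eq_single hdist rfl)⟩
end

section
/- Let α be a positive Borel measure on ℝ with all moments finite (∫_ℝ |t|^k dα(t) < ∞ for every k ≥ 0), let n ≥ 0 and m ≥ 1 be integers, and let π₀, π₁, …, π_{n+m−1} be polynomials such that each π_j is monic of degree j and ∫_ℝ π_j(t) π_k(t) dα(t) = 0 whenever j ≠ k. Assume ∫_{ℝ^n} Δ(t₁,…,t_n)² dα(t₁)…dα(t_n) > 0. Then for all reals μ₁,…,μ_m: det( π_{n+j−1}(μ_i) )_{i,j=1}^m = Δ(μ₁,…,μ_m) · ( ∫_{ℝ^n} ∏_{i=1}^n ∏_{j=1}^m (μ_j−t_i)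 · Δ(t₁,…,t_n)² · ∏_{i=1}^n dα(t_i) ) / ( ∫_{ℝ^n} Δ(t₁,…,t_n)² · ∏_{i=1}^n dα(t_i) ). (This is the Brezin–Hikami determinant formula, Proposition 3.4 of the paper.) -/
open MeasureTheory Finset Matrix

/-!
For monic `π_j` of degree `j`, `det[π_j(x_i)] = Δ(x)`. Hence `Δ(μ) ∏ (μ_j - t_i) Δ(t)²` is the
product of the `(n+m)`-determinant `det[π_j(t, μ)]` and the `n`-determinant `det[π_j(t_i)]`.
Expanding both determinants and integrating term by term (Andréief), the integral becomes `n!`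
times the determinant of the matrix whose `t`-rows are the inner products `⟨π_c, π_i⟩` and whose
`μ`-rows are the values `π_c(μ_k)`. Orthogonality makes this matrix block lower triangular, with
determinant `∏ ⟨π_i, π_i⟩ · det[π_{n+j}(μ_i)]`; the case `m = 0` identifies the denominator as
`n! ∏ ⟨π_i, π_i⟩`.
-/

open Equiv

section Andreief

variable {ι κ X : Type*} [Fintype ι] [DecidableEq ι] [Fintype κ] [DecidableEq κ]

lemma det_mul_det_eq_sum_perm (P : ι ⊕ κ → X → ℝ) (Q : ι → X → ℝ) (y : κ → X) (t : ι → X) :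
    (of fun r c => P c (Sum.elim t y r)).det * (of fun i j => Q j (t i)).det =
      ∑ σ : Perm (ι ⊕ κ), ∑ τ : Perm ι, ((Perm.sign σ : ℤ) : ℝ) * ((Perm.sign τ : ℤ) : ℝ) *
        (∏ k, P (σ (.inr k)) (y k)) * ∏ i, P (σ (.inl i)) (t i) * Q (τ i) (t i) := by
  rw [← det_transpose, ← det_transpose (of _), det_apply', det_apply', sum_mul_sum]
  refine sum_congr rfl fun σ _ => sum_congr rfl fun τ _ => ?_
  simp only [transpose_apply, of_apply, Fintype.prod_sum_type, Sum.elim_inl, Sum.elim_inr,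
    prod_mul_distrib]
  ring

variable [MeasurableSpace X] {α : Measure X} [SigmaFinite α]

lemma integral_det_mul_det_eq_sum_perm (P : ι ⊕ κ → X → ℝ) (Q : ι → X → ℝ) (y : κ → X)
    (hPQ : ∀ c i, Integrable (fun s => P c s * Q i s) α) :
    ∫ t, (of fun r c => P c (Sum.elim t y r)).det * (of fun i j => Q j (t i)).det
        ∂(Measure.pi fun _ => α) =
      ∑ σ : Perm (ι ⊕ κ), ∑ τ : Perm ι, ((Perm.sign σ : ℤ) : ℝ) * ((Perm.sign τ : ℤ) : ℝ) *
        (∏ k, P (σ (.inr k)) (y k)) * ∏ i, ∫ s, P (σ (.inl i)) s * Q (τ i) s ∂α := by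
  have hint (σ : Perm (ι ⊕ κ)) (τ : Perm ι) : Integrable
      (fun t : ι → X => ∏ i, P (σ (.inl i)) (t i) * Q (τ i) (t i)) (Measure.pi fun _ => α) :=
    Integrable.fintype_prod fun i => hPQ _ _
  simp only [det_mul_det_eq_sum_perm]
  rw [integral_finsetSum _ fun σ _ => integrable_finsetSum _ fun τ _ => (hint σ τ).const_mul _]
  refine sum_congr rfl fun σ _ => ?_
  rw [integral_finsetSum _ fun τ _ => (hint σ τ).const_mul _]
  refine sum_congr rfl fun τ _ => ?_
  rw [integral_const_mul, integral_fintype_prod_eq_prod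
    (fun i s => P (σ (.inl i)) s * Q (τ i) s)]

/-- Andréief's identity, with the rows indexed by `κ` frozen at the points `y`. -/
theorem integral_det_mul_det (P : ι ⊕ κ → X → ℝ) (Q : ι → X → ℝ) (y : κ → X)
    (hPQ : ∀ c i, Integrable (fun s => P c s * Q i s) α) :
    ∫ t, (of fun r c => P c (Sum.elim t y r)).det * (of fun i j => Q j (t i)).det
        ∂(Measure.pi fun _ => α) =
      (Fintype.card ι).factorial *
        (of fun r c => Sum.elim (fun i => ∫ s, P c s * Q i s ∂α) (fun k => P c (y k)) r).det := by
  set G : ι ⊕ κ → ι → ℝ := fun c i => ∫ s, P c s * Q i s ∂α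
  have hdet : (of fun r c => Sum.elim (G c) (fun k => P c (y k)) r).det =
      ∑ σ : Perm (ι ⊕ κ), ((Perm.sign σ : ℤ) : ℝ) *
        (∏ k, P (σ (.inr k)) (y k)) * ∏ i, G (σ (.inl i)) i := by
    rw [← det_transpose, det_apply']
    refine sum_congr rfl fun σ _ => ?_
    simp only [transpose_apply, of_apply, Fintype.prod_sum_type, Sum.elim_inl, Sum.elim_inr]
    ring
  -- Substituting `σ ↦ σ * sumCongr τ 1` removes the dependence on `τ`.
  have hτ (τ : Perm ι) : ∑ σ : Perm (ι ⊕ κ), ((Perm.sign σ : ℤ) : ℝ) * ((Perm.sign τ : ℤ) : ℝ) *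
      (∏ k, P (σ (.inr k)) (y k)) * ∏ i, G (σ (.inl i)) (τ i) =
      (of fun r c => Sum.elim (G c) (fun k => P c (y k)) r).det := by
    rw [hdet, ← Equiv.sum_comp (Equiv.mulRight (Perm.sumCongr τ 1))]
    refine sum_congr rfl fun σ _ => ?_
    have hsq : ((Perm.sign τ : ℤ) : ℝ) * ((Perm.sign τ : ℤ) : ℝ) = 1 := by
      rw [← Int.cast_mul, ← Units.val_mul, Int.units_mul_self, Units.val_one, Int.cast_one]
    simp only [coe_mulRight, Perm.coe_mul, Function.comp_apply, Perm.sumCongr_apply,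
      Sum.map_inl, Sum.map_inr, Perm.coe_one, id_eq, Perm.sign_mul, Perm.sign_sumCongr,
      Perm.sign_one, mul_one, Units.val_mul, Int.cast_mul]
    rw [Equiv.prod_comp τ (fun i => G (σ (.inl i)) i)]
    linear_combination (((Perm.sign σ : ℤ) : ℝ) * (∏ k, P (σ (.inr k)) (y k)) *
      ∏ i, G (σ (.inl i)) i) * hsq
  rw [integral_det_mul_det_eq_sum_perm P Q y hPQ, sum_comm]
  refine (sum_congr rfl fun τ _ => hτ τ).trans ?_
  rw [sum_const, card_univ, Fintype.card_perm, nsmul_eq_mul]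

end Andreief

lemma vand_eq_prod_ite {k : ℕ} (x : Fin k → ℝ) :
    vand x = ∏ a, ∏ b, if a < b then x b - x a else 1 := by
  rw [vand, prod_filter, ← prod_product', univ_product_univ]

lemma vand_eq_prod_Ioi {k : ℕ} (x : Fin k → ℝ) :
    vand x = ∏ a, ∏ b ∈ Ioi a, (x b - x a) := by
  simp only [vand_eq_prod_ite, ← prod_filter, filter_lt_eq_Ioi]

lemma vand_append {n m : ℕ} (t : Fin n → ℝ) (y : Fin m → ℝ) :
    vand (Fin.append t y) = vand t * vand y * ∏ i, ∏ j, (y j - t i) := by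
  have hll (i i' : Fin n) : Fin.castAdd m i < Fin.castAdd m i' ↔ i < i' := Iff.rfl
  have hlr (i : Fin n) (j : Fin m) : Fin.castAdd m i < Fin.natAdd n j := by
    simp only [Fin.lt_def, Fin.val_castAdd, Fin.val_natAdd]; omega
  have hrl (j : Fin m) (i : Fin n) : ¬ Fin.natAdd n j < Fin.castAdd m i := by
    simp only [Fin.lt_def, Fin.val_castAdd, Fin.val_natAdd]; omega
  simp only [vand_eq_prod_ite, Fin.prod_univ_add, Fin.append_left, Fin.append_right,
    prod_mul_distrib, hll, hrl, hlr, Fin.natAdd_lt_natAdd_iff, ↓reduceIte, prod_const_one, mul_one]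
  ring

lemma det_eval_monic_eq_vand {k : ℕ} (π : ℕ → Polynomial ℝ)
    (hmonic : ∀ j < k, (π j).Monic ∧ (π j).natDegree = j) (x : Fin k → ℝ) :
    (of fun i j : Fin k => (π j).eval (x i)).det = vand x := by
  rw [← det_eval_matrixOfPolynomials_eq_det_vandermonde x (fun j => π j)
      (fun j => (hmonic j j.isLt).2) (fun j => (hmonic j j.isLt).1),
    det_vandermonde, vand_eq_prod_Ioi]

lemma integrable_eval_of_integrable_abs_pow {α : Measure ℝ}
    (hmom : ∀ k : ℕ, Integrable (fun t => |t| ^ k) α) (p : Polynomial ℝ) :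
    Integrable (fun t => p.eval t) α := by
  have hpow (k : ℕ) : Integrable (fun t : ℝ => t ^ k) α :=
    (hmom k).mono' (continuous_pow k).aestronglyMeasurable
      (.of_forall fun t => by rw [Real.norm_eq_abs, abs_pow])
  simp only [Polynomial.eval_eq_sum_range]
  exact integrable_finsetSum _ fun k _ => (hpow k).const_mul _

theorem vand_mul_integral_prod_sub_mul_vand_sq (n m : ℕ) (α : Measure ℝ) [SigmaFinite α]
    (π : ℕ → Polynomial ℝ)
    (hint : ∀ a b, Integrable (fun s => (π a).eval s * (π b).eval s) α)
    (hmonic : ∀ j < n + m, (π j).Monic ∧ (π j).natDegree = j)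
    (horth : ∀ j < n + m, ∀ k < n + m, j ≠ k → ∫ s, (π j).eval s * (π k).eval s ∂α = 0)
    (μ : Fin m → ℝ) :
    vand μ * ∫ t : Fin n → ℝ, (∏ i, ∏ j, (μ j - t i)) * vand t ^ 2 ∂(Measure.pi fun _ => α) =
      n.factorial * (∏ k : Fin n, ∫ s, (π k).eval s * (π k).eval s ∂α) *
        (of fun i j : Fin m => (π (n + j)).eval (μ i)).det := by
  set P : Fin n ⊕ Fin m → ℝ → ℝ := fun c s => (π (finSumFinEquiv c)).eval s
  have hpoint (t : Fin n → ℝ) : vand μ * ((∏ i, ∏ j, (μ j - t i)) * vand t ^ 2) =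
      (of fun r c => P c (Sum.elim t μ r)).det * (of fun i j : Fin n => (π j).eval (t i)).det := by
    have hbig : (of fun r c => P c (Sum.elim t μ r)).det = vand (Fin.append t μ) := by
      rw [← det_eval_monic_eq_vand π hmonic, ← det_submatrix_equiv_self finSumFinEquiv]
      congr 1
      ext (i | j) c <;> simp [P]
    rw [hbig, vand_append, det_eval_monic_eq_vand π fun j hj => hmonic j (by omega)]
    ring
  have hblock : (of fun r c => Sum.elim (fun i : Fin n => ∫ s, P c s * (π i).eval s ∂α)
        (fun k => P c (μ k)) r) =
      fromBlocks (diagonal fun k : Fin n => ∫ s, (π k).eval s * (π k).eval s ∂α) 0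
        (of fun (k : Fin m) (i : Fin n) => (π i).eval (μ k))
        (of fun i j : Fin m => (π (n + j)).eval (μ i)) := by
    ext (i | k) (i' | j)
    · by_cases h : i = i'
      · subst h; simp [P]
      · simpa [P, h] using horth i' (by omega) i (by omega) (Fin.val_ne_of_ne (Ne.symm h))
    · simpa [P] using horth (n + j) (by omega) i (by omega) (by omega)
    · simp [P]
    · simp [P]
  simp only [← integral_const_mul, hpoint]
  rw [integral_det_mul_det P (fun j s => (π j).eval s) μ fun c i => hint _ _, hblock,
    det_fromBlocks_zero₁₂, det_diagonal, Fintype.card_fin, mul_assoc]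

theorem statement19_general (n m : ℕ) (α : Measure ℝ) [SigmaFinite α]
    (hmom : ∀ k : ℕ, Integrable (fun t => |t| ^ k) α)
    (π : ℕ → Polynomial ℝ)
    (hmonic : ∀ j < n + m, (π j).Monic ∧ (π j).natDegree = j)
    (horth : ∀ j < n + m, ∀ k < n + m, j ≠ k →
      (∫ t, (π j).eval t * (π k).eval t ∂α) = 0)
    (hpos : 0 < ∫ t : Fin n → ℝ, vand t ^ 2 ∂(Measure.pi fun _ => α))
    (μ : Fin m → ℝ) :
    Matrix.det (Matrix.of fun i j : Fin m => (π (n + (j : ℕ))).eval (μ i)) =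
      vand μ *
        (∫ t : Fin n → ℝ, (∏ i, ∏ j, (μ j - t i)) * vand t ^ 2 ∂(Measure.pi fun _ => α)) /
        ∫ t : Fin n → ℝ, vand t ^ 2 ∂(Measure.pi fun _ => α) := by
  have hint (a b : ℕ) : Integrable (fun s => (π a).eval s * (π b).eval s) α := by
    simpa only [Polynomial.eval_mul] using integrable_eval_of_integrable_abs_pow hmom (π a * π b)
  have hnum := vand_mul_integral_prod_sub_mul_vand_sq n m α π hint hmonic horth μ
  have hden := vand_mul_integral_prod_sub_mul_vand_sq n 0 α π hint
    (fun j _ => hmonic j (by omega)) (fun j _ k _ => horth j (by omega) k (by omega)) Fin.elim0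
  have hvand0 : vand (Fin.elim0 : Fin 0 → ℝ) = 1 := by simp [vand]
  simp only [hvand0, Fin.prod_univ_zero, prod_const_one, det_fin_zero, one_mul, mul_one] at hden
  rw [eq_div_iff hpos.ne', hden, hnum]
  ring

theorem statement19 (n m : ℕ) (hm : 1 ≤ m) (α : Measure ℝ) [SigmaFinite α]
    (hmom : ∀ k : ℕ, Integrable (fun t => |t| ^ k) α)
    (π : ℕ → Polynomial ℝ)
    (hmonic : ∀ j < n + m, (π j).Monic ∧ (π j).natDegree = j)
    (horth : ∀ j < n + m, ∀ k < n + m, j ≠ k →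
      (∫ t, (π j).eval t * (π k).eval t ∂α) = 0)
    (hpos : 0 < ∫ t : Fin n → ℝ, vand t ^ 2 ∂(Measure.pi fun _ => α))
    (μ : Fin m → ℝ) :
    Matrix.det (Matrix.of fun i j : Fin m => (π (n + (j : ℕ))).eval (μ i)) =
      vand μ *
        (∫ t : Fin n → ℝ, (∏ i, ∏ j, (μ j - t i)) * vand t ^ 2 ∂(Measure.pi fun _ => α)) /
        ∫ t : Fin n → ℝ, vand t ^ 2 ∂(Measure.pi fun _ => α) :=
  statement19_general n m α hmom π hmonic horth hpos μ
end
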